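/- arXiv:math/0601054 — 4 statements merged into one kernel-verified Lean document; each statement's English description precedes it below -/
import Mathlib

section
/- For every natural number n ≥ 3, the prime counting function satisfies Laurent's formula: π(n) = 2 + ∑_{k=5}^{n} (e^{2πi·(k−1)!/k} − 1)/(e^{−2πi·(1/k)} − 1), where the sum is over integers k with 5 ≤ k ≤ n (and is empty if n < 5). In particular each denominator e^{−2πi/k} − 1 is nonzero for k ≥ 5. -/
/-!
With `ζ = e^{2πi/k}`, the `k`-th summand is `(ζ^{(k-1)!} - 1) / (ζ⁻¹ - 1)`, and `ζ^N` only depends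
on `N` modulo `k`. By Wilson's theorem `(k-1)! ≡ -1 (mod k)` for `k` prime, so the summand is `1`;
for composite `k ≠ 4` one has `k ∣ (k-1)!`, so the summand is `0`. The sum therefore counts the
primes in `[5, n]`, and the `2` accounts for the primes `2` and `3`.
-/

open Complex Finset Nat Real

lemma Nat.mul_dvd_factorial {a b m : ℕ} (ha : 0 < a) (hab : a < b) (hbm : b ≤ m) :
    a * b ∣ m ! :=
  calc a * b ∣ (b - 1)! * b := Nat.mul_dvd_mul_right (Nat.dvd_factorial ha (by omega)) b
    _ = b ! := by rw [mul_comm, Nat.mul_factorial_pred (by omega)]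
    _ ∣ m ! := Nat.factorial_dvd_factorial hbm

lemma Nat.dvd_factorial_pred_of_not_prime {k : ℕ} (hk : 1 < k) (hk4 : k ≠ 4) (hp : ¬ k.Prime) :
    k ∣ (k - 1)! := by
  have hprime := Nat.minFac_prime (show k ≠ 1 by omega)
  have hsq := Nat.minFac_sq_le_self (by omega) hp
  obtain ⟨b, hkab⟩ := k.minFac_dvd
  generalize k.minFac = a at hprime hsq hkab
  have ha := hprime.two_le
  have hab : a ≤ b := Nat.le_of_mul_le_mul_left (by rw [← hkab, ← sq]; exact hsq) (by omega)
  have hb : b < k := by nlinarith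
  rcases hab.lt_or_eq with hab | rfl
  · exact hkab ▸ Nat.mul_dvd_factorial (by omega) hab (by omega)
  · have ha3 : 3 ≤ a := by
      by_contra! h
      exact hk4 (by rw [hkab, show a = 2 by omega])
    have : 2 * a < a * a := by nlinarith
    calc k = a * a := hkab
      _ ∣ a * (2 * a) := Nat.mul_dvd_mul_left a (Nat.dvd_mul_left a 2)
      _ ∣ (k - 1)! := Nat.mul_dvd_factorial (by omega) (by omega) (by omega)

lemma Nat.Prime.dvd_factorial_pred_add_one {p : ℕ} (hp : p.Prime) : p ∣ (p - 1)! + 1 := by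
  have := Fact.mk hp
  rw [← ZMod.natCast_eq_zero_iff]
  push_cast
  rw [ZMod.wilsons_lemma, neg_add_cancel]

lemma IsPrimitiveRoot.pow_eq_inv_of_dvd_add_one {M : Type*} [DivisionCommMonoid M] {ζ : M}
    {k N : ℕ} (hζ : IsPrimitiveRoot ζ k) (hN : k ∣ N + 1) : ζ ^ N = ζ⁻¹ :=
  eq_inv_of_mul_eq_one_left (by rw [← pow_succ, hζ.pow_eq_one_iff_dvd]; exact hN)

namespace Complex

lemma exp_two_pi_I_mul_div (N k : ℕ) :
    exp (2 * π * I * (N / k)) = exp (2 * π * I / k) ^ N := by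
  rw [← exp_nat_mul]; ring_nf

lemma exp_neg_two_pi_I_div (k : ℕ) : exp (-(2 * π * I) / k) = (exp (2 * π * I / k))⁻¹ := by
  rw [← exp_neg]; ring_nf

lemma exp_neg_two_pi_I_div_sub_one_ne_zero {k : ℕ} (hk : 1 < k) :
    exp (-(2 * π * I) / k) - 1 ≠ 0 := by
  rw [exp_neg_two_pi_I_div, sub_ne_zero]
  exact (isPrimitiveRoot_exp k (by omega)).inv.ne_one hk

lemma laurent_summand_eq_ite {k : ℕ} (hk : 1 < k) (hk4 : k ≠ 4) :
    (exp (2 * π * I * ((k - 1)! / k)) - 1) / (exp (-(2 * π * I) / k) - 1) =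
      if k.Prime then 1 else 0 := by
  have hζ := isPrimitiveRoot_exp k (by omega)
  have hden := exp_neg_two_pi_I_div_sub_one_ne_zero hk
  rw [exp_two_pi_I_mul_div]
  split_ifs with hp
  · rw [hζ.pow_eq_inv_of_dvd_add_one hp.dvd_factorial_pred_add_one, ← exp_neg_two_pi_I_div,
      div_self hden]
  · rw [(hζ.pow_eq_one_iff_dvd _).2 (Nat.dvd_factorial_pred_of_not_prime hk hk4 hp), sub_self,
      zero_div]

end Complex

lemma Nat.primeCounting_eq_two_add_card_filter_prime_Icc_five {n : ℕ} (hn : 3 ≤ n) :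
    primeCounting n = 2 + #{k ∈ Icc 5 n | k.Prime} := by
  have hsplit : {k ∈ Icc 2 n | k.Prime} = {2, 3} ∪ {k ∈ Icc 5 n | k.Prime} := by
    ext k
    have : ¬ Nat.Prime 4 := by decide
    simp only [mem_filter, mem_Icc, mem_union, mem_insert, mem_singleton]
    grind [Nat.prime_two, Nat.prime_three]
  rw [← primesLE_card_eq_primeCounting, primesLE_eq_filter_Icc_two, hsplit,
    card_union_of_disjoint (by simp), card_pair (by decide)]

/-- **Laurent's 1898 formula for the prime counting function.**
For every `n ≥ 3`, `π(n) = 2 + ∑_{k=5}^{n} (e^{2πi·(k−1)!/k} − 1)/(e^{−2πi/k} − 1)`,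
and each denominator `e^{−2πi/k} − 1` is nonzero for `k ≥ 5`. -/
theorem laurent_prime_counting_formula (n : ℕ) (hn : 3 ≤ n) :
    (∀ k : ℕ, 5 ≤ k → Complex.exp (-(2 * (Real.pi : ℂ) * Complex.I) / k) - 1 ≠ 0) ∧
    (Nat.primeCounting n : ℂ) =
      2 + ∑ k ∈ Finset.Icc 5 n,
        (Complex.exp (2 * (Real.pi : ℂ) * Complex.I * ((Nat.factorial (k - 1) : ℂ) / k)) - 1) /
          (Complex.exp (-(2 * (Real.pi : ℂ) * Complex.I) / k) - 1) := by
  refine ⟨fun k hk => exp_neg_two_pi_I_div_sub_one_ne_zero (by omega), ?_⟩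
  rw [sum_congr rfl fun k hk => laurent_summand_eq_ite (by grind) (by grind), sum_boole,
    primeCounting_eq_two_add_card_filter_prime_Icc_five hn]
  norm_cast
end

section
/- Let θ be a nonzero real number and define, on functions ξ : ℝ → ℂ, the connection operators (∇₁ξ)(s) = −(2πi s/θ)·ξ(s) and (∇₂ξ)(s) = ξ'(s). Then the curvature is constant: for every differentiable function ξ : ℝ → ℂ one has (∇₁(∇₂ξ))(s) − (∇₂(∇₁ξ))(s) = (2πi/θ)·ξ(s) for all s ∈ ℝ; i.e. Ω = ∇₁∇₂ − ∇₂∇₁ is the scalar operator (2πi/θ)·Id. In particular, since the module S(ℝ) has dimension θ over A_θ, the pairing of dimension and curvature yields the integrality phenomenon θ × (1/θ) = 1. -/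
/-- `(∇₁ξ)(s) = −(2πi s/θ)·ξ(s)`. -/
noncomputable def nabla₁ (θ : ℝ) (ξ : ℝ → ℂ) : ℝ → ℂ :=
  fun s => -(2 * (Real.pi : ℂ) * Complex.I * (s : ℂ) / (θ : ℂ)) * ξ s

/-- `(∇₂ξ)(s) = ξ'(s)`. -/
noncomputable def nabla₂ (ξ : ℝ → ℂ) : ℝ → ℂ := deriv ξ

/-- The canonical commutation relation `[c·x, d/dx] = −c` of the Heisenberg algebra. -/
theorem linear_mul_deriv_sub_deriv_linear_mul (c : ℂ) {ξ : ℝ → ℂ} {s : ℝ}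
    (hξ : DifferentiableAt ℝ ξ s) :
    c * s * deriv ξ s - deriv (fun t : ℝ => c * t * ξ t) s = -c * ξ s := by
  have hlin : HasDerivAt (fun t : ℝ => c * t) c s := by
    simpa using (hasDerivAt_id s).ofReal_comp.const_mul c
  have hprod : HasDerivAt (fun t : ℝ => c * t * ξ t) (c * ξ s + c * s * deriv ξ s) s :=
    hlin.mul hξ.hasDerivAt
  rw [hprod.deriv]
  ring

theorem nabla₁_eq_linear_mul (θ : ℝ) (ξ : ℝ → ℂ) :
    nabla₁ θ ξ = fun t : ℝ => -(2 * Real.pi * Complex.I / θ) * t * ξ t := by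
  ext t
  simp only [nabla₁]
  ring

/-- **The curvature of the canonical connection on the Schwartz module is constant**:
`(∇₁∇₂ − ∇₂∇₁)ξ = (2πi/θ)·ξ`, and pairing the dimension `θ` of the module with the
curvature `1/θ` yields the integer `θ × (1/θ) = 1`. -/
theorem connection_curvature_constant (θ : ℝ) (hθ : θ ≠ 0)
    (ξ : ℝ → ℂ) (hξ : Differentiable ℝ ξ) :
    (∀ s : ℝ, nabla₁ θ (nabla₂ ξ) s - nabla₂ (nabla₁ θ ξ) s =
      (2 * (Real.pi : ℂ) * Complex.I / (θ : ℂ)) * ξ s) ∧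
    θ * (1 / θ) = 1 := by
  refine ⟨fun s => ?_, mul_one_div_cancel hθ⟩
  rw [nabla₂, nabla₂, nabla₁_eq_linear_mul, nabla₁_eq_linear_mul,
    linear_mul_deriv_sub_deriv_linear_mul _ (hξ s), neg_neg]
end

section
/- For a complex number s, one has (2 : ℂ)^{−s} + (4 : ℂ)^{−s} = 1 if and only if either (i) there exists an integer n with s = log φ/log 2 + 2πi·n/log 2, or (ii) there exists an integer n with s = −log φ/log 2 + 2πi·(n + 1/2)/log 2, where φ = (1+√5)/2 is the golden ratio. Consequently the dimension spectrum of the spectral triple of the Fibonacci Cantor set, i.e. the set of poles of s ↦ 2/(1 − 2^{−s} − 4^{−s}), is Σ = { log φ/log 2 + 2πi n/log 2 : n ∈ ℤ } ∪ { −log φ/log 2 + 2πi (n+1/2)/log 2 : n ∈ ℤ }. -/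
/-- **Dimension spectrum of the Fibonacci Cantor set.**
`2^{−s} + 4^{−s} = 1` iff `s = log φ/log 2 + 2πi·n/log 2` or
`s = −log φ/log 2 + 2πi·(n + 1/2)/log 2` for some integer `n`, where `φ = (1+√5)/2`;
these are exactly the poles of `s ↦ 2/(1 − 2^{−s} − 4^{−s})`. -/
theorem fibonacci_dimension_spectrum (s : ℂ) :
    (2 : ℂ) ^ (-s) + (4 : ℂ) ^ (-s) = 1 ↔
      (∃ n : ℤ, s = ((Real.log ((1 + Real.sqrt 5) / 2) / Real.log 2 : ℝ) : ℂ) +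
          2 * (Real.pi : ℂ) * Complex.I * (n : ℂ) / ((Real.log 2 : ℝ) : ℂ)) ∨
      (∃ n : ℤ, s = -((Real.log ((1 + Real.sqrt 5) / 2) / Real.log 2 : ℝ) : ℂ) +
          2 * (Real.pi : ℂ) * Complex.I * ((n : ℂ) + 1 / 2) / ((Real.log 2 : ℝ) : ℂ)) := by
  have h5 : Real.sqrt 5 ^ 2 = 5 := Real.sq_sqrt (by norm_num)
  have h5nn : (0:ℝ) ≤ Real.sqrt 5 := Real.sqrt_nonneg 5
  have hr5gt : (1:ℝ) < Real.sqrt 5 := by nlinarith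
  set φ : ℝ := (1 + Real.sqrt 5) / 2 with hφdef
  set a : ℝ := (Real.sqrt 5 - 1) / 2 with hadef
  have hφpos : 0 < φ := by rw [hφdef]; linarith
  have hapos : 0 < a := by rw [hadef]; linarith
  have hmul : a * φ = 1 := by rw [hadef, hφdef]; nlinarith
  have hla : Real.log a = -Real.log φ := by
    rw [eq_inv_of_mul_eq_one_left hmul, Real.log_inv]
  have hL0 : Real.log 2 ≠ 0 := ne_of_gt (Real.log_pos (by norm_num))
  have hLc : ((Real.log 2 : ℝ) : ℂ) ≠ 0 := Complex.ofReal_ne_zero.mpr hL0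
  have clog2 : Complex.log 2 = ((Real.log 2 : ℝ) : ℂ) := by
    rw [show (2:ℂ) = ((2:ℝ):ℂ) by norm_num, ← Complex.ofReal_log (by norm_num)]
  have clog4 : Complex.log 4 = 2 * ((Real.log 2 : ℝ) : ℂ) := by
    rw [show (4:ℂ) = ((4:ℝ):ℂ) by norm_num, ← Complex.ofReal_log (by norm_num),
      show (4:ℝ) = 2 ^ 2 by norm_num, Real.log_pow]
    push_cast; ring
  set w : ℂ := Complex.exp (((Real.log 2 : ℝ) : ℂ) * (-s)) with hwdef
  have h2s : (2 : ℂ) ^ (-s) = w := by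
    rw [Complex.cpow_def_of_ne_zero (by norm_num), clog2]
  have h4s : (4 : ℂ) ^ (-s) = w ^ 2 := by
    rw [Complex.cpow_def_of_ne_zero (by norm_num), clog4, hwdef,
      ← Complex.exp_nat_mul]
    push_cast; ring_nf
  rw [h2s, h4s]
  have h5c : ((Real.sqrt 5 : ℝ) : ℂ) ^ 2 = 5 := by
    rw [← Complex.ofReal_pow, h5]; norm_num
  have hfac : w + w ^ 2 = 1 ↔ (w - (a:ℂ)) * (w + (φ:ℂ)) = 0 := by
    constructor <;> intro h
    · push_cast [hadef, hφdef]
      linear_combination h - (1/4) * h5c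
    · push_cast [hadef, hφdef] at h
      linear_combination h + (1/4) * h5c
  rw [hfac, mul_eq_zero, sub_eq_zero, add_eq_zero_iff_eq_neg]
  have haexp : (a : ℂ) = Complex.exp ((Real.log a : ℝ) : ℂ) := by
    rw [← Complex.ofReal_exp, Real.exp_log hapos]
  have hφexp : (-(φ : ℂ)) = Complex.exp (((Real.log φ : ℝ) : ℂ) + Real.pi * Complex.I) := by
    rw [Complex.exp_add, Complex.exp_pi_mul_I, ← Complex.ofReal_exp, Real.exp_log hφpos]
    ring
  rw [hwdef, haexp, hφexp, Complex.exp_eq_exp_iff_exists_int,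
    Complex.exp_eq_exp_iff_exists_int]
  -- replace `a`'s log by `-log φ`
  have hla' : ((Real.log a : ℝ) : ℂ) = -((Real.log φ : ℝ) : ℂ) := by
    rw [hla]; push_cast; ring
  rw [hla']
  -- abbreviations, made opaque
  set lφ : ℂ := ((Real.log φ : ℝ) : ℂ) with hlφdef
  set L : ℂ := ((Real.log 2 : ℝ) : ℂ) with hLdef
  rw [show ((Real.log φ / Real.log 2 : ℝ) : ℂ) = lφ / L by
    rw [hlφdef, hLdef]; push_cast; ring]
  clear_value lφ L
  clear_value φ a
  have aux : ∀ X : ℂ, (L * (-s) = X) ↔ s = -(X / L) := by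
    intro X
    rw [mul_comm, ← eq_div_iff hLc, neg_eq_iff_eq_neg]
  constructor
  · rintro (⟨n, hn⟩ | ⟨n, hn⟩)
    · left
      refine ⟨-n, ?_⟩
      rw [aux] at hn
      rw [hn]
      push_cast
      ring
    · right
      refine ⟨-n - 1, ?_⟩
      rw [aux] at hn
      rw [hn]
      push_cast
      ring
  · rintro (⟨n, hn⟩ | ⟨n, hn⟩)
    · left
      refine ⟨-n, ?_⟩
      rw [aux, hn]
      push_cast
      ring
    · right
      refine ⟨-n - 1, ?_⟩
      rw [aux, hn]
      push_cast
      ring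
end

section
/- Let Λ > 0 and E > 0 be real numbers with E ≤ 2πΛ². Then the 2-dimensional Lebesgue measure of the region B₊ = { (p,q) ∈ [0,Λ] × [0,Λ] : 2π·p·q ≤ E } equals (E/2π)·2·log Λ − (E/2π)·(log(E/2π) − 1). -/
/-!
With `c = E / 2π` the region is `{(p, q) ∈ [0, Λ]² : p q ≤ c}`. Its vertical slice over `p ∈ (0, Λ]`
is `[0, min Λ (c / p)]`, so by Fubini the area is `∫₀^Λ min Λ (c / p) dp`. The hyperbola `q = c / p`
crosses the top edge at `p = c / Λ`: the rectangle `[0, c / Λ] × [0, Λ]` contributes `c`, and the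
region under the hyperbola contributes `∫_{c/Λ}^Λ c / p dp = c log (Λ² / c)`.
-/

open MeasureTheory Set Real

def hyperbolicRegion (a b c : ℝ) : Set (ℝ × ℝ) :=
  {x | x.1 ∈ Icc 0 a ∧ x.2 ∈ Icc 0 b ∧ x.1 * x.2 ≤ c}

namespace hyperbolicRegion

variable {a b c : ℝ}

lemma measurableSet (a b c : ℝ) : MeasurableSet (hyperbolicRegion a b c) :=
  (measurableSet_Icc.preimage measurable_fst).inter <|
    (measurableSet_Icc.preimage measurable_snd).inter <|
      measurableSet_le (measurable_fst.mul measurable_snd) measurable_const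

lemma preimage_mk_of_mem_Ioc {p : ℝ} (hp : p ∈ Ioc 0 a) :
    Prod.mk p ⁻¹' hyperbolicRegion a b c = Icc 0 (min b (c / p)) := by
  ext q
  simp only [hyperbolicRegion, mem_preimage, mem_ofPred_eq, mem_Icc, le_min_iff,
    le_div_iff₀ hp.1, mul_comm q p]
  exact ⟨fun ⟨_, ⟨hq, hqb⟩, hpq⟩ => ⟨hq, hqb, hpq⟩,
    fun ⟨hq, hqb, hpq⟩ => ⟨⟨hp.1.le, hp.2⟩, ⟨hq, hqb⟩, hpq⟩⟩

lemma preimage_mk_of_notMem_Icc {p : ℝ} (hp : p ∉ Icc 0 a) :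
    Prod.mk p ⁻¹' hyperbolicRegion a b c = ∅ :=
  eq_empty_of_forall_notMem fun _ hq => hp hq.1

lemma volume_preimage_mk_ae_eq :
    (fun p => volume (Prod.mk p ⁻¹' hyperbolicRegion a b c)) =ᵐ[volume]
      (Ioc 0 a).indicator fun p => ENNReal.ofReal (min b (c / p)) := by
  -- The slice over `p = 0` is all of `[0, b]`, which the indicator misses.
  filter_upwards [Measure.ae_ne volume 0] with p hp0
  by_cases hp : p ∈ Ioc 0 a
  · rw [indicator_of_mem hp, preimage_mk_of_mem_Ioc hp, Real.volume_Icc, sub_zero]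
  · have hp' : p ∉ Icc 0 a := fun h => hp ⟨lt_of_le_of_ne h.1 (Ne.symm hp0), h.2⟩
    rw [indicator_of_notMem hp, preimage_mk_of_notMem_Icc hp', measure_empty]

end hyperbolicRegion

lemma setLIntegral_Ioc_const_div {u v c : ℝ} (hu : 0 < u) (huv : u ≤ v) (hc : 0 ≤ c) :
    ∫⁻ p in Ioc u v, ENNReal.ofReal (c / p) = ENNReal.ofReal (c * log (v / u)) := by
  have hpos : ∀ p ∈ Icc u v, 0 < p := fun p hp => hu.trans_le hp.1
  have hint : IntegrableOn (fun p => c / p) (Ioc u v) :=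
    ((continuousOn_const.div continuousOn_id fun p hp => (hpos p hp).ne').integrableOn_Icc).mono_set
      Ioc_subset_Icc_self
  rw [← ofReal_integral_eq_lintegral_ofReal hint
    ((ae_restrict_iff' measurableSet_Ioc).2 (ae_of_all _ fun p hp =>
      div_nonneg hc (hpos p (Ioc_subset_Icc_self hp)).le)),
    ← intervalIntegral.integral_of_le huv]
  simp only [div_eq_mul_inv, intervalIntegral.integral_const_mul,
    integral_inv_of_pos hu (hu.trans_le huv)]

lemma setLIntegral_Ioc_min_const_div {a b c : ℝ} (hb : 0 < b) (hc : 0 < c) (hcab : c ≤ a * b) :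
    ∫⁻ p in Ioc 0 a, ENNReal.ofReal (min b (c / p)) =
      ENNReal.ofReal (c * (1 + log (a * b / c))) := by
  have hcb : 0 < c / b := div_pos hc hb
  have hcba : c / b ≤ a := (div_le_iff₀ hb).2 hcab
  have hflat : EqOn (fun p => ENNReal.ofReal (min b (c / p))) (fun _ => ENNReal.ofReal b)
      (Ioc 0 (c / b)) := fun p hp =>
    congrArg ENNReal.ofReal (min_eq_left ((le_div_iff₀ hp.1).2 ((le_div_iff₀' hb).1 hp.2)))
  have hcurved : EqOn (fun p => ENNReal.ofReal (min b (c / p))) (fun p => ENNReal.ofReal (c / p))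
      (Ioc (c / b) a) := fun p hp =>
    congrArg ENNReal.ofReal
      (min_eq_right ((div_le_iff₀ (hcb.trans hp.1)).2 ((div_lt_iff₀' hb).1 hp.1).le))
  have hlog : 0 ≤ log (a * b / c) := log_nonneg ((one_le_div hc).2 hcab)
  rw [← Ioc_union_Ioc_eq_Ioc hcb.le hcba, lintegral_union measurableSet_Ioc
      (Ioc_disjoint_Ioc_of_le le_rfl), setLIntegral_congr_fun measurableSet_Ioc hflat,
    setLIntegral_congr_fun measurableSet_Ioc hcurved, setLIntegral_const, Real.volume_Ioc,
    sub_zero, setLIntegral_Ioc_const_div hcb hcba hc.le]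
  rw [← ENNReal.ofReal_mul hb.le, mul_div_cancel₀ c hb.ne', div_div_eq_mul_div,
    ← ENNReal.ofReal_add hc.le (mul_nonneg hc.le hlog), mul_one_add]

theorem volume_hyperbolicRegion {a b c : ℝ} (hb : 0 < b) (hc : 0 < c) (hcab : c ≤ a * b) :
    volume (hyperbolicRegion a b c) = ENNReal.ofReal (c * (1 + log (a * b / c))) := by
  rw [Measure.volume_eq_prod, Measure.prod_apply (hyperbolicRegion.measurableSet a b c),
    lintegral_congr_ae hyperbolicRegion.volume_preimage_mk_ae_eq,
    lintegral_indicator measurableSet_Ioc, setLIntegral_Ioc_min_const_div hb hc hcab]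

/-- **Phase-space area for the Hamiltonian `h(q,p) = 2πqp` with cutoff `Λ`.**
For `0 < Λ`, `0 < E ≤ 2πΛ²`, the Lebesgue area of
`B₊ = {(p,q) ∈ [0,Λ]² : 2πpq ≤ E}` equals
`(E/2π)·2·log Λ − (E/2π)·(log(E/2π) − 1)`. -/
theorem phase_space_area (Λ E : ℝ) (hΛ : 0 < Λ) (hE : 0 < E)
    (hEΛ : E ≤ 2 * Real.pi * Λ ^ 2) :
    volume {x : ℝ × ℝ | x.1 ∈ Set.Icc 0 Λ ∧ x.2 ∈ Set.Icc 0 Λ ∧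
        2 * Real.pi * x.1 * x.2 ≤ E} =
      ENNReal.ofReal (E / (2 * Real.pi) * (2 * Real.log Λ) -
        E / (2 * Real.pi) * (Real.log (E / (2 * Real.pi)) - 1)) := by
  have hπ : 0 < 2 * π := by positivity
  have hregion : {x : ℝ × ℝ | x.1 ∈ Icc 0 Λ ∧ x.2 ∈ Icc 0 Λ ∧ 2 * π * x.1 * x.2 ≤ E} =
      hyperbolicRegion Λ Λ (E / (2 * π)) := by
    ext x
    simp only [hyperbolicRegion, mem_ofPred_eq, le_div_iff₀' hπ, mul_assoc]
  have hc : 0 < E / (2 * π) := div_pos hE hπ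
  have hcΛ : E / (2 * π) ≤ Λ * Λ := by rw [div_le_iff₀' hπ]; nlinarith
  rw [hregion, volume_hyperbolicRegion hΛ hc hcΛ, log_div (by positivity) hc.ne',
    log_mul hΛ.ne' hΛ.ne']
  congr 1
  ring
end
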